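/- arXiv:1907.02344 — 6 statements merged into one kernel-verified Lean document; each statement's English description precedes it below -/
import Mathlib

section
/- Define h(s) = (1+θ/n)s - Q(s) and H(s) = h(s)/((1+θ/n)s) for s ∈ (0,1], where Q(s) = 1 - f(1-s) and f is the probability generating function of an offspring distribution with mean 1+θ/n and probability p₀ > 0 of zero offspring. Then 0 ≤ H(s) ≤ (θ/n + p₀)/(1 + θ/n) ≤ 1 for all s ∈ (0,1], provided θ ≥ 0 and θ/n + p₀ ≤ 1. -/
/-!
Writing `x = 1 - s`, the complement of the generating function is
`Q(s) = ∑ pᵢ (1 - xⁱ)`. Bernoulli's inequality `1 - xⁱ ≤ i (1 - x)` bounds it above by the mean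
times `s`, which gives `H ≥ 0`; the bound `1 - xⁱ ≥ 1 - x = s` for `i ≥ 1` bounds it below by
`(1 - p₀) s`, which gives the upper bound on `H`.
-/

open Real Set

section GeneratingFunction

variable {p : ℕ → ℝ} {x : ℝ}

lemma summable_mul_pow_of_nonneg (hp : ∀ i, 0 ≤ p i) (hps : Summable p) (hx0 : 0 ≤ x)
    (hx1 : x ≤ 1) : Summable fun i => p i * x ^ i :=
  hps.of_nonneg_of_le (fun i => mul_nonneg (hp i) (pow_nonneg hx0 i))
    (fun i => mul_le_of_le_one_right (hp i) (pow_le_one₀ hx0 hx1))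

lemma tsum_sub_tsum_mul_pow (hp : ∀ i, 0 ≤ p i) (hps : Summable p) (hx0 : 0 ≤ x)
    (hx1 : x ≤ 1) : ∑' i, p i - ∑' i, p i * x ^ i = ∑' i, p i * (1 - x ^ i) := by
  rw [← hps.tsum_sub (summable_mul_pow_of_nonneg hp hps hx0 hx1)]
  simp only [mul_sub, mul_one]

lemma summable_mul_one_sub_pow (hp : ∀ i, 0 ≤ p i) (hps : Summable p) (hx0 : 0 ≤ x)
    (hx1 : x ≤ 1) : Summable fun i => p i * (1 - x ^ i) := by
  simpa only [mul_sub, mul_one] using hps.sub (summable_mul_pow_of_nonneg hp hps hx0 hx1)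

lemma tsum_mul_one_sub_pow_le_mean (hp : ∀ i, 0 ≤ p i) (hps : Summable p)
    (hmean : Summable fun i : ℕ => (i : ℝ) * p i) (hx0 : 0 ≤ x) (hx1 : x ≤ 1) :
    ∑' i, p i * (1 - x ^ i) ≤ (1 - x) * ∑' i : ℕ, (i : ℝ) * p i := by
  rw [← tsum_mul_left]
  refine (summable_mul_one_sub_pow hp hps hx0 hx1).tsum_le_tsum (fun i => ?_) (hmean.mul_left _)
  have bernoulli : 1 + i * (x - 1) ≤ (1 + (x - 1)) ^ i := one_add_mul_le_pow (by linarith) i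
  rw [add_sub_cancel] at bernoulli
  nlinarith [hp i]

lemma mul_tsum_sub_head_le_tsum_mul_one_sub_pow (hp : ∀ i, 0 ≤ p i) (hps : Summable p)
    (hx0 : 0 ≤ x) (hx1 : x ≤ 1) :
    (1 - x) * (∑' i, p i - p 0) ≤ ∑' i, p i * (1 - x ^ i) := by
  have hQs := summable_mul_one_sub_pow hp hps hx0 hx1
  rw [hps.tsum_eq_zero_add, hQs.tsum_eq_zero_add, pow_zero, sub_self, mul_zero, zero_add,
    add_sub_cancel_left, ← tsum_mul_left]
  refine (((summable_nat_add_iff 1).mpr hps).mul_left _).tsum_le_tsum (fun i => ?_)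
    ((summable_nat_add_iff 1).mpr hQs)
  have : x ^ (i + 1) ≤ x := pow_le_of_le_one hx0 hx1 i.succ_ne_zero
  nlinarith [hp (i + 1)]

end GeneratingFunction

theorem stmt_2_general (θ : ℝ) (n : ℕ) (hθ : 0 ≤ θ) (p : ℕ → ℝ)
    (hnonneg : ∀ i, 0 ≤ p i)
    (hsum : ∑' i : ℕ, p i = 1)
    (hmean : ∑' i : ℕ, (i : ℝ) * p i = 1 + θ / n)
    (hsmall : θ / n + p 0 ≤ 1) :
    let f : ℝ → ℝ := fun s => ∑' i : ℕ, p i * s ^ i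
    let Q : ℝ → ℝ := fun s => 1 - f (1 - s)
    let h : ℝ → ℝ := fun s => (1 + θ / n) * s - Q s
    let H : ℝ → ℝ := fun s => h s / ((1 + θ / n) * s)
    ∀ s ∈ Ioc (0:ℝ) 1,
      0 ≤ H s ∧ H s ≤ (θ / n + p 0) / (1 + θ / n) ∧
        (θ / n + p 0) / (1 + θ / n) ≤ 1 := by
  intro f Q h H s ⟨hs0, hs1⟩
  have hc : 0 ≤ θ / n := by positivity
  have hps : Summable p := by
    by_contra hns
    simp [tsum_eq_zero_of_not_summable hns] at hsum
  have hips : Summable fun i : ℕ => (i : ℝ) * p i := by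
    by_contra hns
    rw [tsum_eq_zero_of_not_summable hns] at hmean
    linarith
  have hx0 : 0 ≤ 1 - s := by linarith
  have hx1 : 1 - s ≤ 1 := by linarith
  have hQ : Q s = ∑' i, p i * (1 - (1 - s) ^ i) := by
    rw [← tsum_sub_tsum_mul_pow hnonneg hps hx0 hx1, hsum]
  have hQ_le : Q s ≤ (1 + θ / n) * s := by
    have := tsum_mul_one_sub_pow_le_mean hnonneg hps hips hx0 hx1
    rwa [hmean, sub_sub_cancel, mul_comm, ← hQ] at this
  have hQ_ge : (1 - p 0) * s ≤ Q s := by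
    have := mul_tsum_sub_head_le_tsum_mul_one_sub_pow hnonneg hps hx0 hx1
    rwa [hsum, sub_sub_cancel, mul_comm, ← hQ] at this
  have hD : 0 < (1 + θ / n) * s := by positivity
  refine ⟨div_nonneg (by linarith) hD.le, ?_, (div_le_one (by linarith)).mpr (by linarith)⟩
  rw [div_le_div_iff₀ hD (by linarith)]
  nlinarith

/-- With `Q(s) = 1 - f(1-s)`, `h(s) = (1+θ/n)s - Q(s)` and
`H(s) = h(s)/((1+θ/n)s)`, one has `0 ≤ H(s) ≤ (θ/n + p₀)/(1+θ/n) ≤ 1`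
for all `s ∈ (0,1]`, provided `θ ≥ 0` and `θ/n + p₀ ≤ 1`. -/
theorem stmt_2 (θ : ℝ) (n : ℕ) (hn : 0 < n) (hθ : 0 ≤ θ) (p : ℕ → ℝ)
    (hp0 : 0 < p 0) (hnonneg : ∀ i, 0 ≤ p i)
    (hsum : ∑' i : ℕ, p i = 1)
    (hmean : ∑' i : ℕ, (i : ℝ) * p i = 1 + θ / n)
    (hsmall : θ / n + p 0 ≤ 1) :
    let f : ℝ → ℝ := fun s => ∑' i : ℕ, p i * s ^ i
    let Q : ℝ → ℝ := fun s => 1 - f (1 - s)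
    let h : ℝ → ℝ := fun s => (1 + θ / n) * s - Q s
    let H : ℝ → ℝ := fun s => h s / ((1 + θ / n) * s)
    ∀ s ∈ Ioc (0:ℝ) 1,
      0 ≤ H s ∧ H s ≤ (θ / n + p 0) / (1 + θ / n) ∧
        (θ / n + p 0) / (1 + θ / n) ≤ 1 :=
  stmt_2_general θ n hθ p hnonneg hsum hmean hsmall
end

section
/- Let f_n be the probability generating function of an offspring distribution with mean 1+θ/n (θ > 0) and variance σₙ² satisfying σₙ² → σ² > 0 with uniformly bounded third moments, and let qₙ be the smallest nonnegative fixed point of f_n. Then qₙ = 1 - 2θ/(nσ²) + o(1/n) as n → ∞. -/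
/-!
Write `t = 1 - q` and `m = f'(1) = 1 + θ/n`. The fixed-point equation `f(1 - t) = 1 - t` reads
`(m - 1) t = f(1 - t) - 1 + m t`, and the Bonferroni inequalities for `(1 - t)^i` squeeze the right
side between `A t² - B t³` and `A t²`, where `A = f''(1)/2 = (σₙ² + m² - m)/2 → σ²/2` and
`B = f'''(1)/6 ≤ γₙ/6` stays bounded. The right side is nondecreasing in `t`, so `t` cannot stay
away from `0` while `m - 1 = θ/n → 0`. A fixed point below `1` exists because `m > 1`, so `t > 0`,
and dividing the squeeze by `t` gives `θ/A ≤ n t ≤ θ/(A - B t)`, whence `n t → 2θ/σ²`.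
-/

open Real Filter Topology

noncomputable def pgf (p : ℕ → ℝ) (r : ℝ) : ℝ := ∑' i, p i * r ^ i

/-- `binomMoment p k = E[(X choose k)] = f⁽ᵏ⁾(1) / k!` for `X` with law `p`. -/
noncomputable def binomMoment (p : ℕ → ℝ) (k : ℕ) : ℝ := ∑' i, (i.choose k : ℝ) * p i

theorem pow_sub_pow_le_natCast_mul_sub {a b : ℝ} (hb : 0 ≤ b) (hba : b ≤ a) (ha : a ≤ 1) (i : ℕ) :
    a ^ i - b ^ i ≤ i * (a - b) := by
  have hmax : max |a| |b| ^ (i - 1) ≤ 1 :=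
    pow_le_one₀ (le_max_of_le_right (abs_nonneg b))
      (max_le ((abs_of_nonneg (hb.trans hba)).trans_le ha)
        ((abs_of_nonneg hb).trans_le (hba.trans ha)))
  calc a ^ i - b ^ i ≤ |a ^ i - b ^ i| := le_abs_self _
    _ ≤ |a - b| * i * max |a| |b| ^ (i - 1) := abs_pow_sub_pow_le a b i
    _ ≤ |a - b| * i := mul_le_of_le_one_right (by positivity) hmax
    _ = i * (a - b) := by rw [abs_of_nonneg (sub_nonneg.2 hba), mul_comm]

theorem one_sub_pow_le {t : ℝ} (ht0 : 0 ≤ t) (ht1 : t ≤ 1) (i : ℕ) :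
    (1 - t) ^ i ≤ 1 - i * t + i.choose 2 * t ^ 2 := by
  induction i with
  | zero => simp
  | succ i ih =>
    have hchoose : ((i + 1).choose 2 : ℝ) = i.choose 2 + i := by
      rw [Nat.choose_succ_succ, Nat.choose_one_right]; push_cast; ring
    have hc : (0 : ℝ) ≤ i.choose 2 := by positivity
    calc (1 - t) ^ (i + 1) = (1 - t) * (1 - t) ^ i := pow_succ' _ _
      _ ≤ (1 - t) * (1 - i * t + i.choose 2 * t ^ 2) :=
        mul_le_mul_of_nonneg_left ih (sub_nonneg.2 ht1)
      _ ≤ 1 - ↑(i + 1) * t + ↑((i + 1).choose 2) * t ^ 2 := by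
        rw [hchoose]; push_cast; nlinarith [mul_nonneg hc (pow_nonneg ht0 3)]

theorem le_one_sub_pow {t : ℝ} (ht0 : 0 ≤ t) (ht1 : t ≤ 1) (i : ℕ) :
    1 - i * t + i.choose 2 * t ^ 2 - i.choose 3 * t ^ 3 ≤ (1 - t) ^ i := by
  induction i with
  | zero => simp
  | succ i ih =>
    have hchoose₂ : ((i + 1).choose 2 : ℝ) = i.choose 2 + i := by
      rw [Nat.choose_succ_succ, Nat.choose_one_right]; push_cast; ring
    have hchoose₃ : ((i + 1).choose 3 : ℝ) = i.choose 3 + i.choose 2 := by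
      rw [Nat.choose_succ_succ]; push_cast; ring
    have hc : (0 : ℝ) ≤ i.choose 3 := by positivity
    calc 1 - ↑(i + 1) * t + ↑((i + 1).choose 2) * t ^ 2 - ↑((i + 1).choose 3) * t ^ 3
        ≤ (1 - t) * (1 - i * t + i.choose 2 * t ^ 2 - i.choose 3 * t ^ 3) := by
          rw [hchoose₂, hchoose₃]; push_cast; nlinarith [mul_nonneg hc (pow_nonneg ht0 4)]
      _ ≤ (1 - t) * (1 - t) ^ i := mul_le_mul_of_nonneg_left ih (sub_nonneg.2 ht1)
      _ = (1 - t) ^ (i + 1) := (pow_succ' _ _).symm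

section Summability

variable {p : ℕ → ℝ}

theorem hasSum_of_tsum_eq_of_ne_zero {f : ℕ → ℝ} {a : ℝ} (h : ∑' i, f i = a) (ha : a ≠ 0) :
    HasSum f a := by
  have hf : Summable f := by
    by_contra hf
    exact ha (h ▸ tsum_eq_zero_of_not_summable hf)
  exact h ▸ hf.hasSum

theorem summable_pow_mul_of_le (hp : ∀ i, 0 ≤ p i) (hp0 : Summable p) {k l : ℕ}
    (hl : Summable fun i : ℕ => (i : ℝ) ^ l * p i) (hkl : k ≤ l) :
    Summable fun i : ℕ => (i : ℝ) ^ k * p i := by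
  refine (hp0.add hl).of_nonneg_of_le (fun i => mul_nonneg (by positivity) (hp i)) fun i => ?_
  have hpow : (i : ℝ) ^ k ≤ 1 + (i : ℝ) ^ l := by
    rcases i.eq_zero_or_pos with rfl | hi
    · simp only [Nat.cast_zero]
      linarith [pow_le_one₀ (le_refl (0 : ℝ)) zero_le_one (n := k), pow_nonneg (le_refl (0 : ℝ)) l]
    · linarith [pow_le_pow_right₀ (Nat.one_le_cast.2 hi) hkl (M₀ := ℝ)]
  nlinarith [hp i]

theorem summable_choose_mul (hp : ∀ i, 0 ≤ p i) {k : ℕ}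
    (hk : Summable fun i : ℕ => (i : ℝ) ^ k * p i) :
    Summable fun i : ℕ => (i.choose k : ℝ) * p i :=
  hk.of_nonneg_of_le (fun i => mul_nonneg (by positivity) (hp i)) fun i =>
    mul_le_mul_of_nonneg_right (by exact_mod_cast Nat.choose_le_pow i k) (hp i)

theorem summable_mul_pow (hp : Summable p) {r : ℝ} (hr : |r| ≤ 1) :
    Summable fun i => p i * r ^ i :=
  (summable_abs_iff.2 hp).of_norm_bounded fun i => by
    rw [norm_mul, norm_pow, Real.norm_eq_abs, Real.norm_eq_abs]
    exact mul_le_of_le_one_right (abs_nonneg _) (pow_le_one₀ (abs_nonneg r) hr)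

end Summability

section GeneratingFunction

variable {p : ℕ → ℝ}

theorem pgf_zero : pgf p 0 = p 0 := by
  rw [pgf, tsum_eq_single 0 fun i hi => by simp [zero_pow hi]]
  simp

theorem continuousOn_pgf (hp : Summable p) : ContinuousOn (pgf p) (Set.Icc (-1) 1) := by
  refine continuousOn_tsum (fun i => by fun_prop) (summable_abs_iff.2 hp) fun i r hr => ?_
  rw [norm_mul, norm_pow, Real.norm_eq_abs, Real.norm_eq_abs]
  exact mul_le_of_le_one_right (abs_nonneg _) (pow_le_one₀ (abs_nonneg r) (abs_le.2 hr))

theorem pgf_sub_pgf_le (hp : ∀ i, 0 ≤ p i) (hp0 : Summable p)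
    (hp1 : Summable fun i : ℕ => (i : ℝ) * p i) {a b : ℝ} (hb : 0 ≤ b) (hba : b ≤ a)
    (ha : a ≤ 1) : pgf p a - pgf p b ≤ (∑' i : ℕ, (i : ℝ) * p i) * (a - b) := by
  have habs : ∀ {r : ℝ}, 0 ≤ r → r ≤ 1 → |r| ≤ 1 := fun h0 h1 => abs_le.2 ⟨by linarith, h1⟩
  rw [pgf, pgf, ← Summable.tsum_sub (summable_mul_pow hp0 (habs (hb.trans hba) ha))
    (summable_mul_pow hp0 (habs hb (hba.trans ha))), ← tsum_mul_right]
  refine Summable.tsum_le_tsum (fun i => ?_) ((summable_mul_pow hp0 (habs (hb.trans hba) ha)).sub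
    (summable_mul_pow hp0 (habs hb (hba.trans ha)))) (hp1.mul_right _)
  calc p i * a ^ i - p i * b ^ i = p i * (a ^ i - b ^ i) := by ring
    _ ≤ p i * (i * (a - b)) :=
      mul_le_mul_of_nonneg_left (pow_sub_pow_le_natCast_mul_sub hb hba ha i) (hp i)
    _ = i * p i * (a - b) := by ring

theorem binomMoment_nonneg (hp : ∀ i, 0 ≤ p i) (k : ℕ) : 0 ≤ binomMoment p k :=
  tsum_nonneg fun i => mul_nonneg (by positivity) (hp i)

theorem factorial_mul_binomMoment_le (hp : ∀ i, 0 ≤ p i) {k : ℕ}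
    (hk : Summable fun i : ℕ => (i : ℝ) ^ k * p i) :
    k.factorial * binomMoment p k ≤ ∑' i : ℕ, (i : ℝ) ^ k * p i := by
  rw [binomMoment, ← tsum_mul_left]
  refine Summable.tsum_le_tsum (fun i => ?_) ((summable_choose_mul hp hk).mul_left _) hk
  have hdesc : (k.factorial * i.choose k : ℝ) ≤ (i : ℝ) ^ k := by
    exact_mod_cast Nat.descFactorial_eq_factorial_mul_choose i k ▸ Nat.descFactorial_le_pow i k
  rw [← mul_assoc]
  exact mul_le_mul_of_nonneg_right hdesc (hp i)

variable (hp : ∀ i, 0 ≤ p i) (hp1 : HasSum p 1)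
include hp hp1

theorem pgf_one_sub_le (hp2 : Summable fun i : ℕ => (i : ℝ) ^ 2 * p i) {t : ℝ} (ht0 : 0 ≤ t)
    (ht1 : t ≤ 1) :
    pgf p (1 - t) ≤ 1 - (∑' i : ℕ, (i : ℝ) * p i) * t + binomMoment p 2 * t ^ 2 := by
  have hmean := (summable_pow_mul_of_le hp hp1.summable hp2 (k := 1) (by norm_num)).hasSum
  have hbinom := (summable_choose_mul hp hp2).hasSum
  simp only [pow_one] at hmean
  refine hasSum_le (fun i => ?_)
    (summable_mul_pow hp1.summable (abs_le.2 ⟨by linarith, by linarith⟩)).hasSum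
    ((hp1.sub (hmean.mul_right t)).add (hbinom.mul_right (t ^ 2)))
  nlinarith [one_sub_pow_le ht0 ht1 i, hp i]

theorem le_pgf_one_sub (hp3 : Summable fun i : ℕ => (i : ℝ) ^ 3 * p i) {t : ℝ} (ht0 : 0 ≤ t)
    (ht1 : t ≤ 1) :
    1 - (∑' i : ℕ, (i : ℝ) * p i) * t + binomMoment p 2 * t ^ 2 - binomMoment p 3 * t ^ 3
      ≤ pgf p (1 - t) := by
  have hmean := (summable_pow_mul_of_le hp hp1.summable hp3 (k := 1) (by norm_num)).hasSum
  have hbinom₂ := (summable_choose_mul hp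
    (summable_pow_mul_of_le hp hp1.summable hp3 (k := 2) (by norm_num))).hasSum
  have hbinom₃ := (summable_choose_mul hp hp3).hasSum
  simp only [pow_one] at hmean
  refine hasSum_le (fun i => ?_)
    (((hp1.sub (hmean.mul_right t)).add (hbinom₂.mul_right (t ^ 2))).sub
      (hbinom₃.mul_right (t ^ 3)))
    (summable_mul_pow hp1.summable (abs_le.2 ⟨by linarith, by linarith⟩)).hasSum
  nlinarith [le_one_sub_pow ht0 ht1 i, hp i]

theorem two_mul_binomMoment_two (hp2 : Summable fun i : ℕ => (i : ℝ) ^ 2 * p i) :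
    2 * binomMoment p 2 = ∑' i : ℕ, ((i : ℝ) - ∑' j : ℕ, (j : ℝ) * p j) ^ 2 * p i
      + (∑' i : ℕ, (i : ℝ) * p i) ^ 2 - ∑' i : ℕ, (i : ℝ) * p i := by
  set m := ∑' i : ℕ, (i : ℝ) * p i
  have hmean : HasSum (fun i : ℕ => (i : ℝ) * p i) m := by
    simpa using (summable_pow_mul_of_le hp hp1.summable hp2 (k := 1) (by norm_num)).hasSum
  have hbinom : ∀ i : ℕ, (i.choose 2 : ℝ) * p i = ((i : ℝ) ^ 2 * p i - i * p i) / 2 := fun i => by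
    rw [Nat.cast_choose_two]; ring
  have hvar : ∀ i : ℕ,
      ((i : ℝ) - m) ^ 2 * p i = (i : ℝ) ^ 2 * p i - 2 * m * (i * p i) + m ^ 2 * p i :=
    fun i => by ring
  rw [binomMoment, tsum_congr hbinom, tsum_congr hvar, ((hp2.hasSum.sub hmean).div_const 2).tsum_eq,
    ((hp2.hasSum.sub (hmean.mul_left (2 * m))).add (hp1.mul_left (m ^ 2))).tsum_eq]
  ring

theorem mean_sub_one_le_of_pgf_eq (hp2 : Summable fun i : ℕ => (i : ℝ) ^ 2 * p i) {q : ℝ}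
    (hq : pgf p q = q) (hq0 : 0 ≤ q) (hq1 : q < 1) :
    (∑' i : ℕ, (i : ℝ) * p i) - 1 ≤ binomMoment p 2 * (1 - q) := by
  have htaylor := pgf_one_sub_le hp hp1 hp2 (sub_nonneg.2 hq1.le) (by linarith)
  rw [sub_sub_cancel, hq] at htaylor
  refine le_of_mul_le_mul_right ?_ (sub_pos.2 hq1)
  nlinarith

theorem sq_mul_sub_le_of_pgf_eq (hp3 : Summable fun i : ℕ => (i : ℝ) ^ 3 * p i) {q : ℝ}
    (hq : pgf p q = q) (hq0 : 0 ≤ q) {ε : ℝ} (hε0 : 0 ≤ ε) (hεq : ε ≤ 1 - q) :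
    ε ^ 2 * (binomMoment p 2 - binomMoment p 3 * ε)
      ≤ ((∑' i : ℕ, (i : ℝ) * p i) - 1) * (1 - q) := by
  -- `pgf p (1 - t) + m t` is nondecreasing in `t`, so the Taylor bound at `ε` passes to `1 - q`
  have hlip := pgf_sub_pgf_le hp hp1.summable
    (by simpa using summable_pow_mul_of_le hp hp1.summable hp3 (k := 1) (by norm_num))
    hq0 (by linarith : q ≤ 1 - ε) (by linarith)
  have htaylor := le_pgf_one_sub hp hp1 hp3 hε0 (by linarith)
  rw [hq] at hlip
  nlinarith

theorem exists_pgf_eq_self_lt_one (hp2 : Summable fun i : ℕ => (i : ℝ) ^ 2 * p i)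
    (hm : 1 < ∑' i : ℕ, (i : ℝ) * p i) : ∃ r, 0 ≤ r ∧ r < 1 ∧ pgf p r = r := by
  set m := ∑' i : ℕ, (i : ℝ) * p i
  set A := binomMoment p 2
  have hA := binomMoment_nonneg hp 2
  set t := min 1 ((m - 1) / (A + 1))
  have ht0 : 0 < t := lt_min one_pos (div_pos (by linarith) (by linarith))
  have ht1 : t ≤ 1 := min_le_left _ _
  have hAt : A * t < m - 1 := calc
    A * t ≤ A * ((m - 1) / (A + 1)) := mul_le_mul_of_nonneg_left (min_le_right _ _) hA
    _ < m - 1 := by rw [mul_div_assoc', div_lt_iff₀ (by linarith)]; nlinarith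
  have hbelow : pgf p (1 - t) - (1 - t) < 0 := by
    nlinarith [pgf_one_sub_le hp hp1 hp2 ht0.le ht1]
  have hcont : ContinuousOn (fun r => pgf p r - r) (Set.Icc 0 (1 - t)) :=
    ((continuousOn_pgf hp1.summable).mono (Set.Icc_subset_Icc (by norm_num) (by linarith))).sub
      continuousOn_id
  obtain ⟨r, hr, hr_eq⟩ := intermediate_value_Icc' (sub_nonneg.2 ht1) hcont
    ⟨hbelow.le, by simpa [pgf_zero] using hp 0⟩
  exact ⟨r, hr.1, by linarith [hr.2], sub_eq_zero.1 hr_eq⟩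

end GeneratingFunction

theorem tendsto_binomMoment_two {p : ℕ → ℕ → ℝ} {σ : ℝ} (hp : ∀ n i, 0 ≤ p n i)
    (hp1 : ∀ n, HasSum (p n) 1) (hp2 : ∀ n, Summable fun i : ℕ => (i : ℝ) ^ 2 * p n i)
    (hmean : Tendsto (fun n => ∑' i : ℕ, (i : ℝ) * p n i) atTop (𝓝 1))
    (hvar : Tendsto (fun n => ∑' i : ℕ, ((i : ℝ) - ∑' j : ℕ, (j : ℝ) * p n j) ^ 2 * p n i)
      atTop (𝓝 (σ ^ 2))) :
    Tendsto (fun n => binomMoment (p n) 2) atTop (𝓝 (σ ^ 2 / 2)) := by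
  have h := ((hvar.add (hmean.pow 2)).sub hmean).div_const 2
  rw [one_pow, add_sub_cancel_right] at h
  refine h.congr fun n => ?_
  linarith [two_mul_binomMoment_two (hp n) (hp1 n) (hp2 n)]

section Asymptotics

variable {t A B : ℕ → ℝ} {a C : ℝ}

theorem tendsto_zero_of_sq_mul_sub_le {c : ℕ → ℝ} (ht0 : ∀ n, 0 ≤ t n) (ha : 0 < a)
    (hA : Tendsto A atTop (𝓝 a)) (hBC : ∀ n, B n ≤ C) (hc : Tendsto c atTop (𝓝 0))
    (h : ∀ᶠ n in atTop, ∀ ε, 0 ≤ ε → ε ≤ t n → ε ^ 2 * (A n - B n * ε) ≤ c n) :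
    Tendsto t atTop (𝓝 0) := by
  refine tendsto_order.2 ⟨fun δ hδ => .of_forall fun n => hδ.trans_le (ht0 n), fun δ hδ => ?_⟩
  set ε := min δ (a / (4 * (|C| + 1)))
  have hε0 : 0 < ε := lt_min hδ (by positivity)
  have hBε : ∀ n, B n * ε ≤ a / 4 := fun n => calc
    B n * ε ≤ |C| * (a / (4 * (|C| + 1))) :=
      mul_le_mul ((hBC n).trans (le_abs_self C)) (min_le_right _ _) hε0.le (abs_nonneg C)
    _ ≤ a / 4 := by
      rw [mul_div_assoc', div_le_div_iff₀ (by positivity) (by norm_num)]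
      nlinarith [abs_nonneg C]
  filter_upwards [h, hA.eventually (eventually_gt_nhds (half_lt_self ha)),
    hc.eventually (eventually_lt_nhds (by positivity : 0 < ε ^ 2 * (a / 4)))] with n hn hAn hcn
  by_contra! hδn
  have := hn ε hε0.le ((min_le_left _ _).trans hδn)
  nlinarith [hBε n, pow_pos hε0 2]

theorem tendsto_natCast_mul_of_bounds {θ : ℝ} (hθ : 0 < θ) (ha : 0 < a)
    (hA : Tendsto A atTop (𝓝 a)) (hB0 : ∀ n, 0 ≤ B n) (hBC : ∀ n, B n ≤ C)
    (ht0 : ∀ n, 0 ≤ t n) (ht1 : ∀ n, t n ≤ 1)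
    (hupper : ∀ᶠ n : ℕ in atTop, θ / n ≤ A n * t n)
    (hlower : ∀ᶠ n : ℕ in atTop, ∀ ε, 0 ≤ ε → ε ≤ t n → ε ^ 2 * (A n - B n * ε) ≤ θ / n * t n) :
    Tendsto (fun n : ℕ => n * t n) atTop (𝓝 (θ / a)) := by
  have hc : Tendsto (fun n : ℕ => θ / n * t n) atTop (𝓝 0) :=
    squeeze_zero (fun n => by have := ht0 n; positivity)
      (fun n => mul_le_of_le_one_right (by positivity) (ht1 n))
      (tendsto_const_div_atTop_nhds_zero_nat θ)
  have ht := tendsto_zero_of_sq_mul_sub_le ht0 ha hA hBC hc hlower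
  have hBt : Tendsto (fun n => B n * t n) atTop (𝓝 0) :=
    squeeze_zero (fun n => mul_nonneg (hB0 n) (ht0 n))
      (fun n => mul_le_mul_of_nonneg_right (hBC n) (ht0 n)) (by simpa using ht.const_mul C)
  have hD : Tendsto (fun n => A n - B n * t n) atTop (𝓝 a) := by simpa using hA.sub hBt
  refine tendsto_of_tendsto_of_tendsto_of_le_of_le' (tendsto_const_nhds.div hA ha.ne')
    (tendsto_const_nhds.div hD ha.ne') ?_ ?_
  · filter_upwards [hupper, hA.eventually (eventually_gt_nhds ha), eventually_gt_atTop 0]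
      with n hn hAn hn0
    rw [div_le_iff₀ (Nat.cast_pos.2 hn0)] at hn
    show θ / A n ≤ _
    rw [div_le_iff₀ hAn]
    linarith
  · filter_upwards [hupper, hlower, hD.eventually (eventually_gt_nhds ha), eventually_gt_atTop 0]
      with n hup hn hDn hn0
    have hn0' : (0 : ℝ) < n := Nat.cast_pos.2 hn0
    have htn : 0 < t n := by
      by_contra! h
      have : θ / n ≤ 0 := by simpa [le_antisymm h (ht0 n)] using hup
      linarith [div_pos hθ hn0']
    have h := hn (t n) (ht0 n) le_rfl
    show _ ≤ θ / (A n - B n * t n)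
    rw [le_div_iff₀ hDn]
    rw [div_mul_eq_mul_div, le_div_iff₀ hn0'] at h
    nlinarith

theorem isLittleO_sub_one_sub_div_of_tendsto {q : ℕ → ℝ} {L : ℝ}
    (h : Tendsto (fun n : ℕ => n * (1 - q n)) atTop (𝓝 L)) :
    (fun n : ℕ => q n - (1 - L / n)) =o[atTop] fun n : ℕ => 1 / (n : ℝ) := by
  refine (Asymptotics.isLittleO_iff_tendsto' ?_).2 ?_
  · filter_upwards [eventually_gt_atTop 0] with n hn h0
    simp [hn.ne'] at h0
  · have := (tendsto_const_nhds (x := L)).sub h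
    rw [sub_self] at this
    refine this.congr' ?_
    filter_upwards [eventually_gt_atTop 0] with n hn
    field_simp
    ring

end Asymptotics

theorem stmt_6_general (θ σ : ℝ) (hθ : 0 < θ) (hσ : 0 < σ)
    (p : ℕ → ℕ → ℝ) (s γ q : ℕ → ℝ)
    (hnonneg : ∀ n i, 0 ≤ p n i)
    (hsum : ∀ n, ∑' i : ℕ, p n i = 1)
    (hmean : ∀ n : ℕ, 0 < n → ∑' i : ℕ, (i : ℝ) * p n i = 1 + θ / n)
    (hvar : ∀ n : ℕ, 0 < n →
      ∑' i : ℕ, ((i : ℝ) - (1 + θ / n)) ^ 2 * p n i = (s n) ^ 2)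
    (hthird : ∀ n, ∑' i : ℕ, (i : ℝ) ^ 3 * p n i = γ n)
    (hthirdsummable : ∀ n, Summable (fun i : ℕ => (i : ℝ) ^ 3 * p n i))
    (hγ : ∃ Γ : ℝ, ∀ n, γ n ≤ Γ)
    (hs : Tendsto s atTop (nhds σ))
    (hqfix : ∀ n, ∑' i : ℕ, p n i * q n ^ i = q n)
    (hq0 : ∀ n, 0 ≤ q n)
    (hqmin : ∀ n : ℕ, ∀ r : ℝ, 0 ≤ r → (∑' i : ℕ, p n i * r ^ i) = r → q n ≤ r) :
    (fun n : ℕ => q n - (1 - 2 * θ / (n * σ ^ 2)))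
      =o[atTop] fun n : ℕ => 1 / (n : ℝ) := by
  obtain ⟨Γ, hΓ⟩ := hγ
  have hlaw n : HasSum (p n) 1 := hasSum_of_tsum_eq_of_ne_zero (hsum n) one_ne_zero
  have hp2 n := summable_pow_mul_of_le (hnonneg n) (hlaw n).summable (hthirdsummable n)
    (k := 2) (by norm_num)
  have hmean' : Tendsto (fun n => ∑' i : ℕ, (i : ℝ) * p n i) atTop (𝓝 1) := by
    have h : Tendsto (fun n : ℕ => 1 + θ / n) atTop (𝓝 1) := by
      simpa using tendsto_const_nhds.add (tendsto_const_div_atTop_nhds_zero_nat θ)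
    exact h.congr' (by filter_upwards [eventually_gt_atTop 0] with n hn using (hmean n hn).symm)
  have hq1 n (hn : 0 < n) : q n < 1 := by
    obtain ⟨r, hr0, hr1, hr⟩ := exists_pgf_eq_self_lt_one (hnonneg n) (hlaw n) (hp2 n)
      (by rw [hmean n hn]; linarith [div_pos hθ (Nat.cast_pos.2 hn)])
    exact (hqmin n r hr0 hr).trans_lt hr1
  have hA := tendsto_binomMoment_two hnonneg hlaw hp2 hmean' <| (hs.pow 2).congr' <| by
    filter_upwards [eventually_gt_atTop 0] with n hn
    rw [hmean n hn, hvar n hn]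
  have hB n : binomMoment (p n) 3 ≤ Γ / 6 := by
    have h := factorial_mul_binomMoment_le (hnonneg n) (hthirdsummable n)
    rw [hthird n] at h
    norm_num [Nat.factorial] at h
    linarith [hΓ n]
  have hnq := tendsto_natCast_mul_of_bounds (t := fun n => 1 - q n) hθ (by positivity) hA
    (fun n => binomMoment_nonneg (hnonneg n) 3) hB
    (fun n => sub_nonneg.2 (hqmin n 1 zero_le_one (by simpa using hsum n)))
    (fun n => by linarith [hq0 n])
    (by
      filter_upwards [eventually_gt_atTop 0] with n hn
      simpa [hmean n hn] using mean_sub_one_le_of_pgf_eq (hnonneg n) (hlaw n) (hp2 n)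
        (hqfix n) (hq0 n) (hq1 n hn))
    (by
      filter_upwards [eventually_gt_atTop 0] with n hn ε hε0 hε
      simpa [hmean n hn] using sq_mul_sub_le_of_pgf_eq (hnonneg n) (hlaw n)
        (hthirdsummable n) (hqfix n) (hq0 n) hε0 hε)
  convert isLittleO_sub_one_sub_div_of_tendsto hnq using 4 with n
  field_simp

/-- For near-critical offspring laws with mean `1 + θ/n` (θ > 0),
variances `σₙ² → σ² > 0` and uniformly bounded third moments, the smallest
nonnegative fixed point `qₙ` of the generating function satisfies
`qₙ = 1 - 2θ/(nσ²) + o(1/n)`. -/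
theorem stmt_6 (θ σ : ℝ) (hθ : 0 < θ) (hσ : 0 < σ)
    (p : ℕ → ℕ → ℝ) (s γ q : ℕ → ℝ)
    (hnonneg : ∀ n i, 0 ≤ p n i) (hp0 : ∀ n, 0 < p n 0)
    (hsum : ∀ n, ∑' i : ℕ, p n i = 1)
    (hmean : ∀ n : ℕ, 0 < n → ∑' i : ℕ, (i : ℝ) * p n i = 1 + θ / n)
    (hvar : ∀ n : ℕ, 0 < n →
      ∑' i : ℕ, ((i : ℝ) - (1 + θ / n)) ^ 2 * p n i = (s n) ^ 2)
    (hspos : ∀ n, 0 < s n)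
    (hthird : ∀ n, ∑' i : ℕ, (i : ℝ) ^ 3 * p n i = γ n)
    (hthirdsummable : ∀ n, Summable (fun i : ℕ => (i : ℝ) ^ 3 * p n i))
    (hγ : ∃ Γ : ℝ, ∀ n, γ n ≤ Γ)
    (hs : Tendsto s atTop (nhds σ))
    (hqfix : ∀ n, ∑' i : ℕ, p n i * q n ^ i = q n)
    (hq0 : ∀ n, 0 ≤ q n)
    (hqmin : ∀ n : ℕ, ∀ r : ℝ, 0 ≤ r → (∑' i : ℕ, p n i * r ^ i) = r → q n ≤ r) :
    (fun n : ℕ => q n - (1 - 2 * θ / (n * σ ^ 2)))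
      =o[atTop] fun n : ℕ => 1 / (n : ℝ) :=
  stmt_6_general θ σ hθ hσ p s γ q hnonneg hsum hmean hvar hthird hthirdsummable hγ hs hqfix hq0
    hqmin
end

section
/- Fix a > 0 and b > 0. There is at most one twice continuously differentiable function ψ̃ : (0,∞) → (0,∞) satisfying ψ̃'' = a ψ̃ + b ψ̃² on (0,∞), lim_{x→0⁺} ψ̃(x) = ∞, and lim_{x→∞} ψ̃(x) = 0. -/
/-!
Comparison by translation. Write `F s = a s + b s²`, strictly increasing on `(0, ∞)`, so that
both functions solve `ψ'' = F ψ`. For `τ > 0` the function `g x = ψ₂ (x + τ) - ψ₁ x` tends to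
`-∞` at `0⁺` (since `ψ₂ τ` is finite while `ψ₁` blows up) and to `0` at `∞`. If `g` were
positive somewhere it would attain a positive maximum at some `x > 0`, where
`g'' x = F (ψ₂ (x + τ)) - F (ψ₁ x) > 0`, which is impossible at a maximum. Hence
`ψ₂ (· + τ) ≤ ψ₁`; letting `τ → 0⁺` and exchanging the roles of `ψ₁` and `ψ₂` gives `ψ₁ = ψ₂`.
-/

open Set Filter Topology

theorem not_isLocalMax_of_deriv_deriv_pos {f : ℝ → ℝ} {x₀ : ℝ}
    (hf : 0 < deriv (deriv f) x₀) (hc : ContinuousAt f x₀) : ¬IsLocalMax f x₀ := by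
  intro hmax
  have hmin : IsLocalMin f x₀ := isLocalMin_of_deriv_deriv_pos hf hmax.deriv_eq_zero hc
  have hconst : f =ᶠ[𝓝 x₀] fun _ => f x₀ :=
    (hmin.and hmax).mono fun _ hx => le_antisymm hx.2 hx.1
  have : deriv (deriv f) x₀ = 0 := by simpa using hconst.deriv.deriv_eq
  exact hf.ne' this

theorem nonpos_of_deriv_deriv_pos_of_pos {f : ℝ → ℝ} (hf : ContinuousOn f (Ioi 0))
    (hf'' : ∀ x ∈ Ioi (0 : ℝ), 0 < f x → 0 < deriv (deriv f) x)
    (h0 : Tendsto f (𝓝[>] 0) atBot) (hinf : Tendsto f atTop (𝓝 0)) :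
    ∀ x ∈ Ioi (0 : ℝ), f x ≤ 0 := by
  intro x₀ hx₀
  by_contra! hpos
  obtain ⟨A, hA, hAx₀, hfA⟩ : ∃ A, 0 < A ∧ A < x₀ ∧ f A < f x₀ :=
    ((eventually_mem_nhdsWithin.and (Ioo_mem_nhdsGT hx₀)).and
      (h0.eventually (eventually_lt_atBot (f x₀)))).exists.imp fun _ h => ⟨h.1.1, h.1.2.2, h.2⟩
  obtain ⟨B, hx₀B, hfB⟩ : ∃ B, x₀ < B ∧ f B < f x₀ :=
    ((eventually_gt_atTop x₀).and (hinf.eventually (eventually_lt_nhds hpos))).exists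
  have hsub : Icc A B ⊆ Ioi 0 := fun y hy => hA.trans_le hy.1
  obtain ⟨z, hz, hzmax⟩ := isCompact_Icc.exists_isMaxOn_mem_subset (s := Ioo A B)
    (hf.mono hsub) ⟨hAx₀.le, hx₀B.le⟩ (by
      rw [Icc_sdiff_Ioo_same (hAx₀.trans hx₀B).le]
      rintro y (rfl | rfl) <;> assumption)
  have hz₀ : 0 < z := hA.trans hz.1
  have hfz : 0 < f z := hpos.trans_le (hzmax ⟨hAx₀.le, hx₀B.le⟩)
  exact not_isLocalMax_of_deriv_deriv_pos (hf'' z hz₀ hfz)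
    (hf.continuousAt (Ioi_mem_nhds hz₀)) (hzmax.isLocalMax (Icc_mem_nhds hz.1 hz.2))

section Comparison

variable {F u v : ℝ → ℝ} (hF : StrictMonoOn F (Ioi 0))
  (hu : ContDiffOn ℝ 2 u (Ioi 0)) (hv : ContDiffOn ℝ 2 v (Ioi 0))
  (hupos : ∀ x ∈ Ioi (0 : ℝ), 0 < u x) (hvpos : ∀ x ∈ Ioi (0 : ℝ), 0 < v x)
  (hu'' : ∀ x ∈ Ioi (0 : ℝ), deriv (deriv u) x = F (u x))
  (hv'' : ∀ x ∈ Ioi (0 : ℝ), deriv (deriv v) x = F (v x))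
  (hu0 : Tendsto u (𝓝[>] 0) atTop) (huinf : Tendsto u atTop (𝓝 0))
  (hvinf : Tendsto v atTop (𝓝 0))
include hF hu hv hupos hvpos hu'' hv'' hu0 huinf hvinf

theorem shift_le_of_deriv_deriv_eq_comp {τ : ℝ} (hτ : 0 < τ) {x : ℝ} (hx : 0 < x) :
    v (x + τ) ≤ u x := by
  have hmaps : MapsTo (· + τ) (Ioi (0 : ℝ)) (Ioi 0) := fun y (hy : 0 < y) =>
    show 0 < y + τ by positivity
  have hvτ : ContDiffOn ℝ 2 (fun y => v (y + τ)) (Ioi 0) := hv.comp (by fun_prop) hmaps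
  set g : ℝ → ℝ := (fun y => v (y + τ)) - u
  have hg'' : ∀ y ∈ Ioi (0 : ℝ), deriv (deriv g) y = F (v (y + τ)) - F (u y) := by
    intro y hy
    have h2 : ∀ f : ℝ → ℝ, deriv (deriv f) = iteratedDeriv 2 f := fun f => by
      simp only [iteratedDeriv_succ, iteratedDeriv_zero]
    rw [h2, iteratedDeriv_sub (hvτ.contDiffAt (Ioi_mem_nhds hy))
      (hu.contDiffAt (Ioi_mem_nhds hy)), iteratedDeriv_comp_add_const, ← h2, ← h2]
    beta_reduce
    rw [hv'' (y + τ) (hmaps hy), hu'' y hy]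
  have hg0 : Tendsto g (𝓝[>] 0) atBot := by
    have hvτ0 : Tendsto (fun y => v (y + τ)) (𝓝[>] 0) (𝓝 (v τ)) := by
      refine ((hv.continuousOn.continuousAt (Ioi_mem_nhds hτ)).tendsto.comp ?_).mono_left
        nhdsWithin_le_nhds
      simpa using (continuous_add_const τ).tendsto 0
    exact (hvτ0.add_atBot (tendsto_neg_atTop_atBot.comp hu0)).congr fun y =>
      (sub_eq_add_neg _ _).symm
  have hginf : Tendsto g atTop (𝓝 0) := by
    have := (hvinf.comp (tendsto_atTop_add_const_right _ τ tendsto_id)).sub huinf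
    rwa [sub_zero] at this
  have hg := nonpos_of_deriv_deriv_pos_of_pos (hvτ.continuousOn.sub hu.continuousOn)
    (fun y hy hgy => by
      rw [hg'' y hy, sub_pos]
      exact hF (hupos y hy) (hvpos _ (hmaps hy)) (sub_pos.1 hgy))
    hg0 hginf x hx
  exact sub_nonpos.1 hg

theorem le_of_deriv_deriv_eq_comp {x : ℝ} (hx : 0 < x) : v x ≤ u x := by
  have hshift : Tendsto (fun τ => v (x + τ)) (𝓝[>] 0) (𝓝 (v x)) := by
    refine ((hv.continuousOn.continuousAt (Ioi_mem_nhds hx)).tendsto.comp ?_).mono_left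
      nhdsWithin_le_nhds
    simpa using (continuous_const_add x).tendsto 0
  exact le_of_tendsto hshift (eventually_mem_nhdsWithin.mono fun τ hτ =>
    shift_le_of_deriv_deriv_eq_comp hF hu hv hupos hvpos hu'' hv'' hu0 huinf hvinf hτ hx)

end Comparison

/-- For `a, b > 0`, there is at most one positive C² function on
`(0,∞)` satisfying `ψ̃'' = a ψ̃ + b ψ̃²` with `ψ̃ → ∞` at `0⁺` and `ψ̃ → 0` at `∞`. -/
theorem stmt_8 (a b : ℝ) (ha : 0 < a) (hb : 0 < b) (ψ₁ ψ₂ : ℝ → ℝ)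
    (h1smooth : ContDiffOn ℝ 2 ψ₁ (Ioi 0))
    (h2smooth : ContDiffOn ℝ 2 ψ₂ (Ioi 0))
    (h1pos : ∀ x ∈ Ioi (0:ℝ), 0 < ψ₁ x)
    (h2pos : ∀ x ∈ Ioi (0:ℝ), 0 < ψ₂ x)
    (h1ode : ∀ x ∈ Ioi (0:ℝ), deriv (deriv ψ₁) x = a * ψ₁ x + b * ψ₁ x ^ 2)
    (h2ode : ∀ x ∈ Ioi (0:ℝ), deriv (deriv ψ₂) x = a * ψ₂ x + b * ψ₂ x ^ 2)
    (h1zero : Tendsto ψ₁ (nhdsWithin 0 (Ioi 0)) atTop)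
    (h2zero : Tendsto ψ₂ (nhdsWithin 0 (Ioi 0)) atTop)
    (h1inf : Tendsto ψ₁ atTop (nhds 0))
    (h2inf : Tendsto ψ₂ atTop (nhds 0)) :
    EqOn ψ₁ ψ₂ (Ioi 0) := by
  have hF : StrictMonoOn (fun s => a * s + b * s ^ 2) (Ioi 0) := fun s (hs : 0 < s) t _ hst => by
    have ht : 0 < t := hs.trans hst
    dsimp only
    nlinarith [mul_lt_mul_of_pos_left hst ha, mul_pos hb (mul_pos (sub_pos.2 hst) (add_pos hs ht))]
  intro x hx
  exact le_antisymm
    (le_of_deriv_deriv_eq_comp hF h2smooth h1smooth h2pos h1pos h2ode h1ode h2zero h2inf h1inf hx)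
    (le_of_deriv_deriv_eq_comp hF h1smooth h2smooth h1pos h2pos h1ode h2ode h1zero h1inf h2inf hx)
end

section
/- Let {a_z}_{z∈ℤ} be a finitely supported probability distribution on ℤ with mean 0 and variance σ_R² > 0, let θ > 0, and define m(γ) = (1+θ/n)Σ_z a_z e^{-γz}. If |β| < √(2θ/σ_R²), then for all sufficiently large n, m(β/√n) · exp(-(β/√n) · m'(β/√n)/m(β/√n)) > 1. -/
/-!
With `F γ = ∑ a_z e^{-γz}` we have `m = (1 + θ/n) F` and `m'/m = F'/F`, so the quantity is
`exp (log (1 + θ/n) + ψ γ)` with `ψ = log F - γ (log F)'`. Since `ψ 0 = 0` and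
`ψ' γ = -γ (log F)'' γ`, l'Hôpital gives `ψ γ ~ -σ_R² γ² / 2`, because `(log F)'' 0` is the variance.
At `γ = β/√n`, `n` times the exponent therefore tends to `θ - β² σ_R² / 2 > 0`.
-/

open Real Set Filter
open Topology

theorem tendsto_sub_mul_deriv_div_sq {L L' L'' : ℝ → ℝ}
    (hL : ∀ γ, HasDerivAt L (L' γ) γ) (hL' : ∀ γ, HasDerivAt L' (L'' γ) γ)
    (hL'' : ContinuousAt L'' 0) (hL0 : L 0 = 0) :
    Tendsto (fun γ => (L γ - γ * L' γ) / γ ^ 2) (𝓝[≠] 0) (𝓝 (-L'' 0 / 2)) := by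
  have hderiv : ∀ γ, HasDerivAt (fun γ => L γ - γ * L' γ) (-γ * L'' γ) γ := fun γ =>
    ((hL γ).sub ((hasDerivAt_id γ).mul (hL' γ))).congr_deriv (by simp only [id]; ring)
  have hnum : Tendsto (fun γ => L γ - γ * L' γ) (𝓝[≠] 0) (𝓝 0) := by
    simpa [hL0] using ((hderiv 0).continuousAt.tendsto).mono_left nhdsWithin_le_nhds
  have hden : Tendsto (fun γ : ℝ => γ ^ 2) (𝓝[≠] 0) (𝓝 0) := by
    simpa using ((continuous_pow 2).tendsto (0 : ℝ)).mono_left nhdsWithin_le_nhds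
  have hratio : Tendsto (fun γ => -γ * L'' γ / (2 * γ)) (𝓝[≠] 0) (𝓝 (-L'' 0 / 2)) := by
    refine ((hL''.neg.div_const 2).tendsto.mono_left nhdsWithin_le_nhds).congr' ?_
    filter_upwards [self_mem_nhdsWithin] with γ (hγ : γ ≠ 0)
    rw [Pi.neg_apply]
    field_simp
  refine HasDerivAt.lhopital_zero_nhdsNE (.of_forall hderiv)
    (.of_forall fun γ => by simpa using hasDerivAt_pow 2 γ) ?_ hnum hden hratio
  filter_upwards [self_mem_nhdsWithin] with γ (hγ : γ ≠ 0)
  exact mul_ne_zero two_ne_zero hγ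

theorem tendsto_log_sub_mul_logDeriv_div_sq {F F' F'' : ℝ → ℝ} {v : ℝ}
    (hF : ∀ γ, HasDerivAt F (F' γ) γ) (hF' : ∀ γ, HasDerivAt F' (F'' γ) γ)
    (hF'' : ContinuousAt F'' 0) (hpos : ∀ γ, 0 < F γ)
    (hF0 : F 0 = 1) (hF'0 : F' 0 = 0) (hF''0 : F'' 0 = v) :
    Tendsto (fun γ => (log (F γ) - γ * (F' γ / F γ)) / γ ^ 2) (𝓝[≠] 0) (𝓝 (-v / 2)) := by
  have hlog : ∀ γ, HasDerivAt (fun γ => log (F γ)) (F' γ / F γ) γ := fun γ =>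
    (hF γ).log (hpos γ).ne'
  have hlogDeriv : ∀ γ, HasDerivAt (fun γ => F' γ / F γ)
      ((F'' γ * F γ - F' γ * F' γ) / F γ ^ 2) γ := fun γ =>
    (hF' γ).div (hF γ) (hpos γ).ne'
  have hcont : ContinuousAt (fun γ => (F'' γ * F γ - F' γ * F' γ) / F γ ^ 2) 0 := by
    have hFc := (hF 0).continuousAt
    have hF'c := (hF' 0).continuousAt
    exact ((hF''.mul hFc).sub (hF'c.mul hF'c)).div (hFc.pow 2) (by simp [hF0])
  simpa [hF0, hF'0, hF''0] using
    tendsto_sub_mul_deriv_div_sq hlog hlogDeriv hcont (by simp [hF0])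

theorem tendsto_div_sqrt_nhdsNE (β : ℝ) (hβ : β ≠ 0) :
    Tendsto (fun n : ℕ => β / √n) atTop (𝓝[≠] 0) := by
  refine tendsto_nhdsWithin_iff.mpr ⟨?_, ?_⟩
  · simpa [div_eq_mul_inv] using
      ((tendsto_sqrt_atTop.comp tendsto_natCast_atTop_atTop).inv_tendsto_atTop).const_mul β
  · filter_upwards [eventually_gt_atTop 0] with n hn
    exact div_ne_zero hβ (by positivity)

theorem tendsto_natCast_mul_comp_div_sqrt {ψ : ℝ → ℝ} {c : ℝ}
    (hψ : Tendsto (fun γ => ψ γ / γ ^ 2) (𝓝[≠] 0) (𝓝 c)) (hψ0 : ψ 0 = 0) (β : ℝ) :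
    Tendsto (fun n : ℕ => n * ψ (β / √n)) atTop (𝓝 (β ^ 2 * c)) := by
  rcases eq_or_ne β 0 with rfl | hβ
  · simp [hψ0]
  refine ((hψ.comp (tendsto_div_sqrt_nhdsNE β hβ)).const_mul (β ^ 2)).congr' ?_
  filter_upwards [eventually_gt_atTop 0] with n hn
  have hn' : (0 : ℝ) < n := by exact_mod_cast hn
  simp only [Function.comp_apply, div_pow, sq_sqrt hn'.le]
  field_simp

section ExpSum

variable (b : ℤ → ℝ) (s : Finset ℤ)

theorem hasDerivAt_sum_mul_exp_neg_mul (γ : ℝ) :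
    HasDerivAt (fun γ => ∑ z ∈ s, b z * exp (-γ * z))
      (∑ z ∈ s, -(z * b z) * exp (-γ * z)) γ := by
  refine HasDerivAt.fun_sum fun z _ => ?_
  have hlin : HasDerivAt (fun γ : ℝ => -γ * z) (-z) γ := by
    simpa using ((hasDerivAt_id γ).neg.mul_const (z : ℝ))
  exact (hlin.exp.const_mul (b z)).congr_deriv (by ring)

theorem continuous_sum_mul_exp_neg_mul : Continuous fun γ : ℝ => ∑ z ∈ s, b z * exp (-γ * z) :=
  continuous_iff_continuousAt.mpr fun γ => (hasDerivAt_sum_mul_exp_neg_mul b s γ).continuousAt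

theorem sum_mul_exp_neg_mul_pos (hb : ∀ z ∈ s, 0 ≤ b z) (hsum : 0 < ∑ z ∈ s, b z) (γ : ℝ) :
    0 < ∑ z ∈ s, b z * exp (-γ * z) := by
  obtain ⟨z, hz, hbz⟩ := Finset.exists_ne_zero_of_sum_ne_zero hsum.ne'
  exact Finset.sum_pos' (fun z hz => mul_nonneg (hb z hz) (exp_pos _).le)
    ⟨z, hz, mul_pos ((hb z hz).lt_of_ne' hbz) (exp_pos _)⟩

end ExpSum

theorem mul_mul_exp_neg_mul_div_eq {c y y' γ : ℝ} (hc : 0 < c) (hy : 0 < y) :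
    c * y * exp (-γ * (c * y' / (c * y))) = exp (log c + (log y - γ * (y' / y))) := by
  rw [mul_div_mul_left _ _ hc.ne', exp_add, exp_log hc, exp_sub, exp_log hy, neg_mul, exp_neg]
  field_simp

theorem eventually_one_lt_mul_exp_neg_mul_div {F F' F'' : ℝ → ℝ} {θ v β : ℝ}
    (hF : ∀ γ, HasDerivAt F (F' γ) γ) (hF' : ∀ γ, HasDerivAt F' (F'' γ) γ)
    (hF'' : ContinuousAt F'' 0) (hpos : ∀ γ, 0 < F γ)
    (hF0 : F 0 = 1) (hF'0 : F' 0 = 0) (hF''0 : F'' 0 = v) (hθ : 0 < θ)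
    (hβ : β ^ 2 * v < 2 * θ) :
    ∀ᶠ n : ℕ in atTop, 1 < (1 + θ / n) * F (β / √n) *
      exp (-(β / √n) * ((1 + θ / n) * F' (β / √n) / ((1 + θ / n) * F (β / √n)))) := by
  set ψ := fun γ => log (F γ) - γ * (F' γ / F γ)
  have hψ := tendsto_natCast_mul_comp_div_sqrt (ψ := ψ)
    (tendsto_log_sub_mul_logDeriv_div_sq hF hF' hF'' hpos hF0 hF'0 hF''0) (by simp [ψ, hF0]) β
  have hlim : Tendsto (fun n : ℕ => n * (log (1 + θ / n) + ψ (β / √n))) atTop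
      (𝓝 (θ + β ^ 2 * (-v / 2))) := by
    simpa only [mul_add, Function.comp_apply] using
      ((tendsto_mul_log_one_add_div_atTop θ).comp tendsto_natCast_atTop_atTop).add hψ
  have hlim_pos : 0 < θ + β ^ 2 * (-v / 2) := by linarith
  filter_upwards [hlim.eventually (eventually_gt_nhds hlim_pos)] with n hn
  rw [mul_mul_exp_neg_mul_div_eq (by positivity) (hpos _), one_lt_exp_iff]
  exact pos_of_mul_pos_right hn (Nat.cast_nonneg n)

/-- Biggins condition. For a finitely supported mean-zero step
distribution with variance `σ_R² > 0`, `θ > 0`, and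
`m(γ) = (1+θ/n) Σ_z a_z e^{-γ z}`: if `|β| < √(2θ/σ_R²)`, then for all
sufficiently large `n`, `m(β/√n) exp(-(β/√n) m'(β/√n)/m(β/√n)) > 1`. -/
theorem stmt_12 (a : ℤ → ℝ) (σR θ β : ℝ) (hσ : 0 < σR) (hθ : 0 < θ)
    (hnonneg : ∀ z, 0 ≤ a z) (hfin : (Function.support a).Finite)
    (hsum : ∑' z : ℤ, a z = 1)
    (hmean : ∑' z : ℤ, (z : ℝ) * a z = 0)
    (hvar : ∑' z : ℤ, (z : ℝ) ^ 2 * a z = σR ^ 2)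
    (hβ : |β| < Real.sqrt (2 * θ / σR ^ 2)) :
    ∀ᶠ n : ℕ in atTop,
      let m : ℝ → ℝ := fun γ => (1 + θ / n) * ∑' z : ℤ, a z * Real.exp (-γ * z)
      1 < m (β / Real.sqrt n) *
        Real.exp (-(β / Real.sqrt n) *
          (deriv m (β / Real.sqrt n) / m (β / Real.sqrt n))) := by
  set s := hfin.toFinset
  have htsum {f : ℤ → ℝ} (hf : Function.support f ⊆ Function.support a) :
      ∑' z, f z = ∑ z ∈ s, f z :=
    tsum_eq_sum' (by simpa [s] using hf)
  have hmass : ∑ z ∈ s, a z = 1 := (htsum subset_rfl).symm.trans hsum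
  have hβ' : β ^ 2 * σR ^ 2 < 2 * θ := by
    have := (lt_sqrt (abs_nonneg β)).mp hβ
    rwa [sq_abs, lt_div_iff₀ (by positivity)] at this
  have key := eventually_one_lt_mul_exp_neg_mul_div (hasDerivAt_sum_mul_exp_neg_mul a s)
    (hasDerivAt_sum_mul_exp_neg_mul _ s) (continuous_sum_mul_exp_neg_mul _ s).continuousAt
    (sum_mul_exp_neg_mul_pos a s (fun z _ => hnonneg z) (hmass ▸ one_pos))
    (by simpa using hmass)
    (by simpa [← htsum (Function.support_mul_subset_right _ _)] using hmean)
    (by rw [htsum (Function.support_mul_subset_right _ _)] at hvar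
        simpa [sq, mul_assoc] using hvar)
    hθ hβ'
  filter_upwards [key] with n hn
  have hm : (fun γ => (1 + θ / n) * ∑' z : ℤ, a z * exp (-γ * z)) =
      fun γ => (1 + θ / n) * ∑ z ∈ s, a z * exp (-γ * z) := funext fun γ => by
    rw [htsum (Function.support_mul_subset_left _ _)]
  simp only [hm, ((hasDerivAt_sum_mul_exp_neg_mul a s _).const_mul _).deriv]
  rwa [htsum (Function.support_mul_subset_left _ _)]
end

section
/- Let ψ be defined on (0,∞) by ψ(x) = 2θ⁺/σ² + (3|θ|/σ²)(coth²(√(|θ|/(2σ_R²)) x) - 1), where θ ≠ 0, σ > 0, σ_R > 0 and θ⁺ = max(θ,0). Then ψ satisfies (σ_R²/2)ψ'' = -θψ + (σ²/2)ψ² on (0,∞), with ψ(x) → ∞ as x → 0⁺ and ψ(x) → 2θ⁺/σ² as x → ∞. -/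
open Real Set Filter

/-- For `θ ≠ 0`, `σ, σ_R > 0`, the function
`ψ(x) = 2θ⁺/σ² + (3|θ|/σ²)(coth²(√(|θ|/(2σ_R²)) x) - 1)` satisfies
`(σ_R²/2) ψ'' = -θ ψ + (σ²/2) ψ²` on `(0,∞)`, with `ψ → ∞` at `0⁺` and
`ψ → 2θ⁺/σ²` at `∞`. -/
theorem stmt_18 (θ σ σR : ℝ) (hθ : θ ≠ 0) (hσ : 0 < σ) (hσR : 0 < σR) :
    let ψ : ℝ → ℝ := fun x =>
      2 * max θ 0 / σ ^ 2 +
        (3 * |θ| / σ ^ 2) *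
          ((Real.cosh (Real.sqrt (|θ| / (2 * σR ^ 2)) * x) /
              Real.sinh (Real.sqrt (|θ| / (2 * σR ^ 2)) * x)) ^ 2 - 1)
    (∀ x : ℝ, 0 < x →
        (σR ^ 2 / 2) * deriv (deriv ψ) x = -θ * ψ x + (σ ^ 2 / 2) * ψ x ^ 2) ∧
      Tendsto ψ (nhdsWithin 0 (Ioi 0)) atTop ∧
      Tendsto ψ atTop (nhds (2 * max θ 0 / σ ^ 2)) := by
  intro ψ
  have habs : 0 < |θ| := abs_pos.mpr hθ
  set k : ℝ := Real.sqrt (|θ| / (2 * σR ^ 2)) with hkdef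
  have hkpos : 0 < k := Real.sqrt_pos.mpr (by positivity)
  have hk2 : k ^ 2 = |θ| / (2 * σR ^ 2) := Real.sq_sqrt (by positivity)
  set b : ℝ := 3 * |θ| / σ ^ 2 with hbdef
  set c0 : ℝ := 2 * max θ 0 / σ ^ 2 with hc0def
  have hbpos : 0 < b := by positivity
  have hψ : ψ = fun x => c0 + b * ((Real.cosh (k * x) / Real.sinh (k * x)) ^ 2 - 1) := rfl
  -- derivative helpers
  have hlin : ∀ x : ℝ, HasDerivAt (fun y : ℝ => k * y) k x := by
    intro x; simpa using (hasDerivAt_id x).const_mul k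
  have hcosh : ∀ x : ℝ, HasDerivAt (fun y : ℝ => Real.cosh (k * y))
      (Real.sinh (k * x) * k) x := by
    intro x
    simpa [Function.comp_def] using (Real.hasDerivAt_cosh (k * x)).comp x (hlin x)
  have hsinh : ∀ x : ℝ, HasDerivAt (fun y : ℝ => Real.sinh (k * y))
      (Real.cosh (k * x) * k) x := by
    intro x
    simpa [Function.comp_def] using (Real.hasDerivAt_sinh (k * x)).comp x (hlin x)
  have hs : ∀ x : ℝ, 0 < x → 0 < Real.sinh (k * x) := by
    intro x hx; exact Real.sinh_pos_iff.mpr (by positivity)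
  set D1 : ℝ → ℝ := fun y => b * (-(2 * k) * Real.cosh (k * y) / Real.sinh (k * y) ^ 3)
    with hD1def
  have lemA : ∀ x : ℝ, 0 < x → HasDerivAt ψ (D1 x) x := by
    intro x hx
    have hsx := hs x hx
    have hsx' : Real.sinh (k * x) ≠ 0 := hsx.ne'
    have hdiv := (hcosh x).div (hsinh x) hsx'
    have h1 := (((hdiv.pow 2).sub_const 1).const_mul b).const_add c0
    rw [hψ]
    refine h1.congr_deriv ?_
    have hcs := Real.cosh_sq (k * x)
    rw [hD1def]
    simp only [Pi.div_apply]
    norm_num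
    field_simp
    left
    linear_combination (-1) * hcs
  set D2 : ℝ → ℝ := fun y =>
      b * (2 * k ^ 2 * (2 * Real.sinh (k * y) ^ 2 + 3) / Real.sinh (k * y) ^ 4) with hD2def
  have lemB : ∀ x : ℝ, 0 < x → HasDerivAt D1 (D2 x) x := by
    intro x hx
    have hsx := hs x hx
    have hsx' : Real.sinh (k * x) ≠ 0 := hsx.ne'
    have hsx3 : Real.sinh (k * x) ^ 3 ≠ 0 := pow_ne_zero _ hsx'
    have hnum := (hcosh x).const_mul (-(2 * k))
    have hden := (hsinh x).pow 3
    have hdiv := hnum.div hden (by simpa using hsx3)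
    have h1 := hdiv.const_mul b
    rw [hD1def]
    refine h1.congr_deriv ?_
    have hcs := Real.cosh_sq (k * x)
    rw [hD2def]
    simp only [Pi.pow_apply]
    norm_num
    field_simp
    left
    linear_combination 3 * hcs
  refine ⟨?_, ?_, ?_⟩
  · -- ODE
    intro x hx
    have hEq : deriv ψ =ᶠ[nhds x] D1 := by
      filter_upwards [Ioi_mem_nhds hx] with y hy
      exact (lemA y hy).deriv
    have h2 : deriv (deriv ψ) x = D2 x := by
      rw [hEq.deriv_eq]; exact (lemB x hx).deriv
    rw [h2, hψ]
    have hsx := hs x hx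
    have hsx' : Real.sinh (k * x) ≠ 0 := hsx.ne'
    have hcs := Real.cosh_sq (k * x)
    rw [hD2def]
    simp only
    rw [div_pow, hcs]
    rw [hk2, hbdef, hc0def]
    rcases lt_or_gt_of_ne hθ with hlt | hgt
    · rw [abs_of_neg hlt, max_eq_right hlt.le]
      field_simp
      ring
    · rw [abs_of_pos hgt, max_eq_left hgt.le]
      field_simp
      ring
  · -- limit at 0+
    rw [hψ]
    have hsinh0 : Tendsto (fun x : ℝ => Real.sinh (k * x)) (nhdsWithin 0 (Ioi 0))
        (nhdsWithin 0 (Ioi 0)) := by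
      apply tendsto_nhdsWithin_of_tendsto_nhds_of_eventually_within
      · have : Continuous fun x : ℝ => Real.sinh (k * x) :=
          Real.continuous_sinh.comp (continuous_const.mul continuous_id)
        simpa using (this.tendsto 0).mono_left nhdsWithin_le_nhds
      · filter_upwards [self_mem_nhdsWithin] with x hx
        exact hs x hx
    have hinv : Tendsto (fun x : ℝ => (Real.sinh (k * x))⁻¹) (nhdsWithin 0 (Ioi 0)) atTop :=
      tendsto_inv_nhdsGT_zero.comp hsinh0
    have hcosh0 : Tendsto (fun x : ℝ => Real.cosh (k * x)) (nhdsWithin 0 (Ioi 0))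
        (nhds 1) := by
      have : Continuous fun x : ℝ => Real.cosh (k * x) :=
        Real.continuous_cosh.comp (continuous_const.mul continuous_id)
      simpa using (this.tendsto 0).mono_left nhdsWithin_le_nhds
    have hcoth : Tendsto (fun x : ℝ => Real.cosh (k * x) / Real.sinh (k * x))
        (nhdsWithin 0 (Ioi 0)) atTop := by
      simp only [div_eq_mul_inv]
      exact hcosh0.pos_mul_atTop one_pos hinv
    have hsq : Tendsto (fun x : ℝ => (Real.cosh (k * x) / Real.sinh (k * x)) ^ 2)
        (nhdsWithin 0 (Ioi 0)) atTop := by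
      have := hcoth.atTop_mul_atTop₀ hcoth
      simpa [sq] using this
    have h1 : Tendsto (fun x : ℝ => (Real.cosh (k * x) / Real.sinh (k * x)) ^ 2 - 1)
        (nhdsWithin 0 (Ioi 0)) atTop := by
      simpa [sub_eq_add_neg] using tendsto_atTop_add_const_right _ (-1 : ℝ) hsq
    exact tendsto_atTop_add_const_left _ c0 (h1.const_mul_atTop hbpos)
  · -- limit at ∞
    rw [hψ]
    have hexp : Tendsto (fun y : ℝ => Real.exp (-(2 * y))) atTop (nhds 0) := by
      apply Real.tendsto_exp_atBot.comp
      apply tendsto_neg_atTop_atBot.comp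
      exact (tendsto_id.const_mul_atTop two_pos)
    have key : Tendsto (fun y : ℝ => (1 + Real.exp (-(2 * y))) / (1 - Real.exp (-(2 * y))))
        atTop (nhds 1) := by
      have := ((tendsto_const_nhds (x := (1:ℝ))).add hexp).div ((tendsto_const_nhds (x := (1:ℝ))).sub hexp)
        (by norm_num : (1:ℝ) - 0 ≠ 0)
      simpa [Pi.div_def] using this
    have heq : ∀ᶠ y in (atTop : Filter ℝ),
        (1 + Real.exp (-(2 * y))) / (1 - Real.exp (-(2 * y))) = Real.cosh y / Real.sinh y := by
      filter_upwards [eventually_gt_atTop (0:ℝ)] with y hy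
      have hsy : (0:ℝ) < Real.sinh y := Real.sinh_pos_iff.mpr hy
      have he1 : Real.exp (-(2 * y)) < 1 := by
        rw [Real.exp_lt_one_iff]; linarith
      have hd2 : (1:ℝ) - Real.exp (-(2 * y)) ≠ 0 := by
        have : (0:ℝ) < 1 - Real.exp (-(2 * y)) := by linarith
        exact this.ne'
      have hd1 : Real.exp y - Real.exp (-y) ≠ 0 := by
        have := hsy
        rw [Real.sinh_eq] at this
        intro h; rw [h] at this; norm_num at this
      rw [Real.cosh_eq, Real.sinh_eq]
      rw [show -(2 * y) = -y + -y by ring, Real.exp_add] at hd2 ⊢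
      have hene : Real.exp y ≠ 0 := (Real.exp_pos y).ne'
      have hmul : Real.exp y * Real.exp (-y) = 1 := by
        rw [← Real.exp_add]; simp
      have hd2' : (1:ℝ) - Real.exp (-y) ^ 2 ≠ 0 := by rw [sq]; exact hd2
      field_simp
      linear_combination (2 * Real.exp (-y)) * hmul
    have hcoth : Tendsto (fun y : ℝ => Real.cosh y / Real.sinh y) atTop (nhds 1) :=
      key.congr' heq
    have hkx : Tendsto (fun x : ℝ => k * x) atTop atTop :=
      tendsto_id.const_mul_atTop hkpos
    have hc : Tendsto (fun x : ℝ => (Real.cosh (k * x) / Real.sinh (k * x)) ^ 2 - 1)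
        atTop (nhds 0) := by
      have := ((hcoth.comp hkx).pow 2).sub (tendsto_const_nhds (x := (1:ℝ)))
      simpa [Function.comp_def] using this
    have := tendsto_const_nhds (x := c0) (f := (atTop : Filter ℝ)) |>.add (hc.const_mul b)
    simpa using this
end

section
/- Let ψ̃₁, ψ̃₂ : (0,∞) → (0,∞) be C² functions with ψ̃ᵢ'' = aψ̃ᵢ + bψ̃ᵢ² (a, b > 0), lim_{x→∞}ψ̃ᵢ(x) = 0 and lim_{x→0⁺}ψ̃₂(x) = ∞. Suppose ψ̃₁(x₀) < ψ̃₂(x₀) for some x₀ > 0. Then for c > 1 sufficiently close to 1, the function f(x) = ψ̃₁(x) - ψ̃₂(cx + c - 1) attains a strictly negative minimum at some interior point x* ∈ (0,∞), and at that point f''(x*) = aψ̃₁(x*) - ac²ψ̃₂(cx*+c-1) + bψ̃₁²(x*) - bc²ψ̃₂²(cx*+c-1) < 0, contradicting f''(x*) ≥ 0; hence no such x₀ exists when ψ̃₁ also satisfies lim_{x→0⁺}ψ̃₁(x) = ∞, proving ψ̃₁ ≥ ψ̃₂ cannot fail, i.e., ψ̃₁ = ψ̃₂. -/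
/-!
Suppose `ψ₁` blows up at `0⁺` but `ψ₁ x₀ < ψ₂ x₀` somewhere. Shifting and stretching `ψ₂` to
`g x = ψ₂ (c * x + (c - 1))` with `c > 1` close to `1` keeps `ψ₁ x₀ < g x₀`, but makes `g` bounded
near `0`. Then `ψ₁ - g` tends to `+∞` at `0⁺` and to `0` at `∞`, so it has a negative interior
minimum `x*`. There `ψ₁ x* < g x*` and `ψ₁'' ≥ g'' = c² F (g x*) > F (g x*) ≥ F (ψ₁ x*) = ψ₁''`
for the monotone positive nonlinearity `F y = a y + b y²`, a contradiction. Hence `ψ₂ ≤ ψ₁`,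
and by symmetry `ψ₁ = ψ₂`.
-/

open Real Set Filter

theorem IsLocalMin.deriv_deriv_nonneg {f : ℝ → ℝ} {x : ℝ} (hmin : IsLocalMin f x)
    (hc : ContinuousAt f x) : 0 ≤ deriv (deriv f) x := by
  by_contra! hneg
  have hmax := isLocalMax_of_deriv_deriv_neg hneg hmin.deriv_eq_zero hc
  have hconst : f =ᶠ[nhds x] fun _ => f x := by
    filter_upwards [hmin, hmax] with y hy₁ hy₂ using le_antisymm hy₂ hy₁
  have hderiv : deriv f =ᶠ[nhds x] fun _ => 0 := by
    filter_upwards [hconst.deriv] with y hy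
    rw [hy, deriv_const]
  rw [hderiv.deriv_eq, deriv_const] at hneg
  exact lt_irrefl 0 hneg

theorem deriv_deriv_le_of_isLocalMin_sub {u v : ℝ → ℝ} {x : ℝ} (hu : ContDiffAt ℝ 2 u x)
    (hv : ContDiffAt ℝ 2 v x) (hmin : IsLocalMin (fun y => u y - v y) x) :
    deriv (deriv v) x ≤ deriv (deriv u) x := by
  have hnonneg := hmin.deriv_deriv_nonneg (hu.continuousAt.sub hv.continuousAt)
  have hsub := iteratedDeriv_fun_sub hu hv
  simp only [iteratedDeriv_succ, iteratedDeriv_zero] at hsub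
  linarith

theorem deriv_comp_mul_add (f : ℝ → ℝ) (c d : ℝ) :
    deriv (fun x => f (c * x + d)) = fun x => c * deriv f (c * x + d) := by
  ext x
  rw [deriv_comp_mul_left c (fun y => f (y + d)) x, deriv_comp_add_const, smul_eq_mul]

theorem deriv_deriv_comp_mul_add (f : ℝ → ℝ) (c d x : ℝ) :
    deriv (deriv fun x => f (c * x + d)) x = c ^ 2 * deriv (deriv f) (c * x + d) := by
  rw [deriv_comp_mul_add, deriv_const_mul_field', deriv_comp_mul_add]
  ring

theorem exists_isLocalMin_le_of_eventually_lt {f : ℝ → ℝ} {a x₀ : ℝ} (hx₀ : a < x₀)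
    (hf : ContinuousOn f (Ioi a)) (hleft : ∀ᶠ x in nhdsWithin a (Ioi a), f x₀ < f x)
    (hright : ∀ᶠ x in atTop, f x₀ < f x) : ∃ x, a < x ∧ IsLocalMin f x ∧ f x ≤ f x₀ := by
  obtain ⟨l, hl, hal, hlx₀⟩ := (hleft.and (Ioo_mem_nhdsGT hx₀)).exists
  obtain ⟨r, hr, hx₀r⟩ := (hright.and (eventually_gt_atTop x₀)).exists
  have hx₀mem : x₀ ∈ Icc l r := ⟨hlx₀.le, hx₀r.le⟩
  obtain ⟨x, hx, hmin⟩ := isCompact_Icc.exists_isMinOn_mem_subset (s := Ioo l r)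
    (hf.mono fun y hy => hal.trans_le hy.1) hx₀mem (by
      rw [Icc_sdiff_Ioo_same (hlx₀.trans hx₀r).le]
      rintro y (rfl | rfl) <;> assumption)
  exact ⟨x, hal.trans hx.1, hmin.isLocalMin (Icc_mem_nhds hx.1 hx.2), hmin hx₀mem⟩

theorem le_of_deriv_deriv_eq_of_tendsto_atTop_nhdsGT {F ψ₁ ψ₂ : ℝ → ℝ}
    (hF : MonotoneOn F (Ioi 0)) (hFpos : ∀ y ∈ Ioi (0:ℝ), 0 < F y)
    (h1smooth : ContDiffOn ℝ 2 ψ₁ (Ioi 0)) (h2smooth : ContDiffOn ℝ 2 ψ₂ (Ioi 0))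
    (h1pos : ∀ x ∈ Ioi (0:ℝ), 0 < ψ₁ x)
    (h1ode : ∀ x ∈ Ioi (0:ℝ), deriv (deriv ψ₁) x = F (ψ₁ x))
    (h2ode : ∀ x ∈ Ioi (0:ℝ), deriv (deriv ψ₂) x = F (ψ₂ x))
    (h1inf : Tendsto ψ₁ atTop (nhds 0)) (h2inf : Tendsto ψ₂ atTop (nhds 0))
    (h1zero : Tendsto ψ₁ (nhdsWithin 0 (Ioi 0)) atTop) :
    ∀ x ∈ Ioi (0:ℝ), ψ₂ x ≤ ψ₁ x := by
  by_contra! ⟨x₀, hx₀, hlt⟩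
  have h2cont : ∀ y ∈ Ioi (0:ℝ), ContinuousAt ψ₂ y := fun y hy =>
    (h2smooth.contDiffAt (isOpen_Ioi.mem_nhds hy)).continuousAt
  obtain ⟨c, hc_lt, hc⟩ : ∃ c, ψ₁ x₀ < ψ₂ (c * x₀ + (c - 1)) ∧ 1 < c := by
    have hcont : ContinuousAt (fun c => ψ₂ (c * x₀ + (c - 1))) 1 :=
      (h2cont x₀ hx₀).comp_of_eq (by fun_prop) (by ring)
    have hnear : ∀ᶠ c in nhdsWithin 1 (Ioi 1), ψ₁ x₀ < ψ₂ (c * x₀ + (c - 1)) :=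
      (hcont.eventually (eventually_gt_nhds (by simpa using hlt))).filter_mono nhdsWithin_le_nhds
    exact (hnear.and self_mem_nhdsWithin).exists
  set g : ℝ → ℝ := fun x => ψ₂ (c * x + (c - 1)) with hg_def
  have hmaps : MapsTo (fun x => c * x + (c - 1)) (Ioi 0) (Ioi 0) := fun x (hx : 0 < x) => by
    show 0 < c * x + (c - 1)
    nlinarith
  have hgsmooth : ContDiffOn ℝ 2 g (Ioi 0) :=
    h2smooth.comp (by fun_prop : ContDiff ℝ 2 fun x : ℝ => c * x + (c - 1)).contDiffOn hmaps
  have hg0 : Tendsto g (nhdsWithin 0 (Ioi 0)) (nhds (g 0)) := by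
    refine (ContinuousAt.tendsto ?_).mono_left nhdsWithin_le_nhds
    exact (h2cont (c - 1) (sub_pos.2 hc)).comp_of_eq (by fun_prop) (by ring)
  have hleft : Tendsto (fun x => ψ₁ x - g x) (nhdsWithin 0 (Ioi 0)) atTop := by
    simpa only [sub_eq_add_neg] using h1zero.atTop_add hg0.neg
  have hright : Tendsto (fun x => ψ₁ x - g x) atTop (nhds 0) := by
    have hσ : Tendsto (fun x => c * x + (c - 1)) atTop atTop :=
      tendsto_atTop_add_const_right _ _ (tendsto_id.const_mul_atTop (by linarith))
    simpa using h1inf.sub (h2inf.comp hσ)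
  have hneg : ψ₁ x₀ - g x₀ < 0 := sub_neg.2 hc_lt
  obtain ⟨x, hx, hmin, hle⟩ := exists_isLocalMin_le_of_eventually_lt hx₀
    (h1smooth.continuousOn.sub hgsmooth.continuousOn) (hleft.eventually_gt_atTop _)
    (hright.eventually (eventually_gt_nhds hneg))
  have hx_nhds : Ioi (0:ℝ) ∈ nhds x := isOpen_Ioi.mem_nhds hx
  have hsecond := deriv_deriv_le_of_isLocalMin_sub (h1smooth.contDiffAt hx_nhds)
    (hgsmooth.contDiffAt hx_nhds) hmin
  rw [hg_def, deriv_deriv_comp_mul_add, h1ode x hx, h2ode _ (hmaps hx)] at hsecond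
  have hψ : ψ₁ x < g x := sub_neg.1 (hle.trans_lt hneg)
  have hgpos : 0 < g x := (h1pos x hx).trans hψ
  have hFle : F (ψ₁ x) ≤ F (g x) := hF (h1pos x hx) hgpos hψ.le
  have hstretch : F (g x) < c ^ 2 * F (g x) :=
    lt_mul_of_one_lt_left (hFpos _ hgpos) (one_lt_pow₀ hc two_ne_zero)
  linarith

/-- Comparison/uniqueness argument for `ψ'' = aψ + bψ²`
(`a, b > 0`). If `ψ̃₁, ψ̃₂` are positive C² solutions on `(0,∞)` tending to 0
at `∞`, with `ψ̃₂ → ∞` at `0⁺`, then no point `x₀` with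
`ψ̃₁(x₀) < ψ̃₂(x₀)` can exist once `ψ̃₁` also tends to `∞` at `0⁺` (the rescaled
comparison function would attain a strictly negative interior minimum where
`f'' < 0`, a contradiction); hence `ψ̃₁ = ψ̃₂` on `(0,∞)`. -/
theorem stmt_19 (a b : ℝ) (ha : 0 < a) (hb : 0 < b) (ψ₁ ψ₂ : ℝ → ℝ)
    (h1smooth : ContDiffOn ℝ 2 ψ₁ (Ioi 0))
    (h2smooth : ContDiffOn ℝ 2 ψ₂ (Ioi 0))
    (h1pos : ∀ x ∈ Ioi (0:ℝ), 0 < ψ₁ x)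
    (h2pos : ∀ x ∈ Ioi (0:ℝ), 0 < ψ₂ x)
    (h1ode : ∀ x ∈ Ioi (0:ℝ), deriv (deriv ψ₁) x = a * ψ₁ x + b * ψ₁ x ^ 2)
    (h2ode : ∀ x ∈ Ioi (0:ℝ), deriv (deriv ψ₂) x = a * ψ₂ x + b * ψ₂ x ^ 2)
    (h1inf : Tendsto ψ₁ atTop (nhds 0))
    (h2inf : Tendsto ψ₂ atTop (nhds 0))
    (h1zero : Tendsto ψ₁ (nhdsWithin 0 (Ioi 0)) atTop)
    (h2zero : Tendsto ψ₂ (nhdsWithin 0 (Ioi 0)) atTop) :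
    (¬ ∃ x₀ ∈ Ioi (0:ℝ), ψ₁ x₀ < ψ₂ x₀) ∧ EqOn ψ₁ ψ₂ (Ioi 0) := by
  have hF : MonotoneOn (fun y => a * y + b * y ^ 2) (Ioi 0) := fun y (hy : 0 < y) z _ hyz => by
    dsimp only
    gcongr
  have hFpos : ∀ y ∈ Ioi (0:ℝ), 0 < a * y + b * y ^ 2 := fun y (hy : 0 < y) => by positivity
  have h21 := le_of_deriv_deriv_eq_of_tendsto_atTop_nhdsGT hF hFpos h1smooth h2smooth h1pos
    h1ode h2ode h1inf h2inf h1zero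
  have h12 := le_of_deriv_deriv_eq_of_tendsto_atTop_nhdsGT hF hFpos h2smooth h1smooth h2pos
    h2ode h1ode h2inf h1inf h2zero
  exact ⟨fun ⟨x₀, hx₀, hlt⟩ => (h21 x₀ hx₀).not_gt hlt,
    fun x hx => le_antisymm (h12 x hx) (h21 x hx)⟩
end
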